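/- Let Assumptions 1 and 2 hold and assume R ≥ ‖x*‖ + δ. Let K > 0, let γ > 4K/(δ^{β−1} κ), let s ≥ γ/2, and let x ∈ B(x*, K/2). Let p be the unique global minimizer over ℝ^d of y ↦ f(y) + ‖y − x‖²/(2s). Then ‖p‖ ≤ R, and consequently clip_R(p) = p. -/

import Mathlib

open MeasureTheory Real Set

-- Clipping operator `clip_R`.
open Classical in
noncomputable def clipR {d : ℕ} (R : ℝ) (x : EuclideanSpace ℝ (Fin d)) : EuclideanSpace ℝ (Fin d) :=
  if x = 0 then 0 else (min R ‖x‖ / ‖x‖) • x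

/-- Consensus point `θ_α(ρ)` of a measure `ρ`. -/
noncomputable def thetaAlpha {d : ℕ} (α : ℝ) (f : EuclideanSpace ℝ (Fin d) → ℝ)
    (ρ : Measure (EuclideanSpace ℝ (Fin d))) : EuclideanSpace ℝ (Fin d) :=
  (∫ y, Real.exp (-α * f y) ∂ρ)⁻¹ • ∫ y, Real.exp (-α * f y) • y ∂ρ

/-- Gaussian measure on `ℝ^d` with mean `m` and covariance `σ2 • I_d`. -/
noncomputable def gaussianE (d : ℕ) (m : EuclideanSpace ℝ (Fin d)) (σ2 : ℝ) :
    Measure (EuclideanSpace ℝ (Fin d)) :=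
  volume.withDensity fun y =>
    ENNReal.ofReal ((2 * Real.pi * σ2) ^ (-(d : ℝ) / 2) * Real.exp (-‖y - m‖ ^ 2 / (2 * σ2)))

/-!
Comparing the proximal objective at `p` and at `x*` gives `f p - f x* ≤ ‖p - x*‖ ‖x* - x‖ / s`,
a bound linear in `‖p - x*‖` whose slope is small because `x` is near `x*` and `s` is large.
Outside `B(x*, δ)` the growth `κ/2 ‖p - x*‖^β` beats this slope, so `p ∈ B(x*, δ) ⊆ B(0, R)`.
-/

theorem sq_norm_sub_sub_sq_norm_sub_le {E : Type*} [SeminormedAddCommGroup E] (x y z : E) :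
    ‖z - x‖ ^ 2 - ‖y - x‖ ^ 2 ≤ 2 * ‖y - z‖ * ‖z - x‖ := by
  have htri : ‖z - x‖ ≤ ‖y - z‖ + ‖y - x‖ := by
    simpa [norm_sub_rev y z] using norm_sub_le_norm_sub_add_norm_sub z y x
  rcases le_total ‖z - x‖ ‖y - z‖ with hzy | hyz
  · nlinarith [norm_nonneg (y - x), norm_nonneg (z - x)]
  · nlinarith [norm_nonneg (y - x), norm_nonneg (y - z)]

theorem sub_le_of_isMinOn_prox {E : Type*} [SeminormedAddCommGroup E] {f : E → ℝ} {s : ℝ}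
    (hs : 0 < s) {x p : E} (hp : IsMinOn (fun y => f y + ‖y - x‖ ^ 2 / (2 * s)) univ p) (z : E) :
    f p - f z ≤ ‖p - z‖ * ‖z - x‖ / s := by
  have hpz : f p + ‖p - x‖ ^ 2 / (2 * s) ≤ f z + ‖z - x‖ ^ 2 / (2 * s) := hp (mem_univ z)
  have hsq := sq_norm_sub_sub_sq_norm_sub_le x p z
  calc f p - f z ≤ (‖z - x‖ ^ 2 - ‖p - x‖ ^ 2) / (2 * s) := by rw [sub_div]; linarith
    _ ≤ 2 * ‖p - z‖ * ‖z - x‖ / (2 * s) := by gcongr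
    _ = ‖p - z‖ * ‖z - x‖ / s := by field_simp

theorem lt_of_mul_rpow_le_mul_self {r δ β κ c : ℝ} (hδ : 0 < δ) (hβ : 1 ≤ β)
    (hκ : 0 ≤ κ) (hle : κ * r ^ β ≤ c * r) (hc : c < κ * δ ^ (β - 1)) : r < δ := by
  by_contra! hδr
  have hr0 : 0 < r := hδ.trans_le hδr
  have hsplit : r ^ β = r ^ (β - 1) * r := by
    rw [← Real.rpow_add_one hr0.ne', sub_add_cancel]
  have hmono : δ ^ (β - 1) ≤ r ^ (β - 1) := Real.rpow_le_rpow hδ.le hδr (by linarith)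
  have : κ * δ ^ (β - 1) * r ≤ c * r := by
    calc κ * δ ^ (β - 1) * r ≤ κ * (r ^ (β - 1) * r) := by
          rw [mul_assoc]; gcongr
      _ = κ * r ^ β := by rw [hsplit]
      _ ≤ c * r := hle
  nlinarith

theorem clipR_eq_self_of_norm_le {d : ℕ} {R : ℝ} {x : EuclideanSpace ℝ (Fin d)} (h : ‖x‖ ≤ R) :
    clipR R x = x := by
  by_cases hx : x = 0
  · simp [clipR, hx]
  · simp [clipR, hx, min_eq_right h]

theorem stmt11_general {d : ℕ}
    (f : EuclideanSpace ℝ (Fin d) → ℝ) (xstar : EuclideanSpace ℝ (Fin d))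
    (κ β : ℝ) (hκ : 0 < κ) (hβ : 1 ≤ β)
    (hgrowth : ∀ x, f xstar + κ / 2 * ‖x - xstar‖ ^ β ≤ f x)
    (δ : ℝ) (hδ : 0 < δ)
    (R : ℝ) (hR : ‖xstar‖ + δ ≤ R)
    (K γ : ℝ) (hγ : 4 * K / (δ ^ (β - 1) * κ) < γ)
    (s : ℝ) (hs : γ / 2 ≤ s)
    (x : EuclideanSpace ℝ (Fin d)) (hx : x ∈ Metric.ball xstar (K / 2))
    (p : EuclideanSpace ℝ (Fin d))
    (hp : IsMinOn (fun y => f y + ‖y - x‖ ^ 2 / (2 * s)) Set.univ p) :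
    ‖p‖ ≤ R ∧ clipR R p = p := by
  have hxK : ‖xstar - x‖ < K / 2 := by rwa [← dist_eq_norm, dist_comm]
  have hK : 0 < K := by linarith [norm_nonneg (xstar - x)]
  have hD : 0 < δ ^ (β - 1) * κ := mul_pos (Real.rpow_pos_of_pos hδ _) hκ
  have hγK : 4 * K < γ * (δ ^ (β - 1) * κ) := (div_lt_iff₀ hD).mp hγ
  have hs0 : 0 < s := by nlinarith
  have hclose : ‖p - xstar‖ < δ := by
    refine lt_of_mul_rpow_le_mul_self hδ hβ hκ.le (c := 2 * ‖xstar - x‖ / s) ?_ ?_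
    · have hprox := sub_le_of_isMinOn_prox hs0 hp xstar
      have hgrow := hgrowth p
      calc κ * ‖p - xstar‖ ^ β ≤ 2 * (‖p - xstar‖ * ‖xstar - x‖ / s) := by linarith
        _ = 2 * ‖xstar - x‖ / s * ‖p - xstar‖ := by ring
    · rw [div_lt_iff₀ hs0]
      nlinarith
  have hnorm : ‖p‖ ≤ R := by
    linarith [norm_le_norm_sub_add p xstar]
  exact ⟨hnorm, clipR_eq_self_of_norm_le hnorm⟩

/-- Lemma 6: the proximal point is left unchanged by clipping:
if `p` is the unique global minimizer of `y ↦ f(y) + ‖y − x‖²/(2s)` with `s ≥ γ/2` and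
`x ∈ B(x*, K/2)`, then `‖p‖ ≤ R` and `clip_R(p) = p`. -/
theorem stmt11 {d : ℕ}
    (f : EuclideanSpace ℝ (Fin d) → ℝ) (xstar : EuclideanSpace ℝ (Fin d))
    (a L κ β : ℝ) (hf : ContDiff ℝ 1 f) (ha : 0 < a) (hL : 0 < L)
    (hgrad : ∀ x, ‖gradient f x‖ ≤ L * (1 + ‖x‖ ^ a))
    (hκ : 0 < κ) (hβ : 1 ≤ β)
    (hgrowth : ∀ x, f xstar + κ / 2 * ‖x - xstar‖ ^ β ≤ f x)
    (hmin : ∀ x, x ≠ xstar → f xstar < f x)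
    (hf3 : ContDiff ℝ 3 f) (δ lam : ℝ) (hδ : 0 < δ) (hlam : 0 < lam)
    (hconv : ConvexOn ℝ (Metric.ball xstar δ) (fun y => f y - lam / 2 * ‖y‖ ^ 2))
    (R : ℝ) (hR : ‖xstar‖ + δ ≤ R)
    (K γ : ℝ) (hK : 0 < K) (hγ : 4 * K / (δ ^ (β - 1) * κ) < γ)
    (s : ℝ) (hs : γ / 2 ≤ s)
    (x : EuclideanSpace ℝ (Fin d)) (hx : x ∈ Metric.ball xstar (K / 2))
    (p : EuclideanSpace ℝ (Fin d))
    (hp : IsMinOn (fun y => f y + ‖y - x‖ ^ 2 / (2 * s)) Set.univ p) :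
    ‖p‖ ≤ R ∧ clipR R p = p :=
  stmt11_general f xstar κ β hκ hβ hgrowth δ hδ R hR K γ hγ s hs x hx p hp
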